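/- Let d ∈ ℕ, T ∈ [0,∞), f ∈ C([0,T]×ℝ^d,ℝ^d), ξ ∈ ℝ^d, let (Ω,ℱ,ℙ) be a probability space, let W: [0,T]×Ω → ℝ^d be a stochastic process with continuous sample paths, let ‖·‖ be a norm on ℝ^d, assume for all r ∈ (0,∞) that sup_{t∈[0,T]} sup{ ‖f(t,x)−f(t,y)‖/‖x−y‖ : x,y ∈ ℝ^d, x ≠ y, ‖x‖+‖y‖ ≤ r } < ∞, and let Y: [0,T]×Ω → ℝ^d satisfy for all t ∈ [0,T] and ω ∈ Ω that s ↦ Y(s,ω) is continuous and Y(t,ω) = ξ + ∫₀^t f(s,Y(s,ω)) ds + W(t,ω). Then Y is a stochastic process, i.e. for every t ∈ [0,T] the map ω ↦ Y(t,ω) is ℱ/ℬ(ℝ^d)-measurable. -/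

import Mathlib

/-!
All norms on `ℝ^d` are equivalent, so `f` is locally Lipschitz for the sup norm. Fix `ω`: after
`f` is modified outside the ball of radius `m` into a globally Lipschitz field, the Picard
iterates of the integral equation driven by `ξ + W(·, ω)` converge to its unique solution, with
the factorial bound `(K t)^n / n!`. Each iterate is measurable in `ω`, because the time integral
of a jointly measurable integrand is, so the limit is measurable. On the event that `Y(·, ω)`
stays in the ball, that limit is `Y(t, ω)`; every continuous path does so for `m` large, so
`Y(t, ·)` is a pointwise limit of measurable maps.
-/

open MeasureTheory ProbabilityTheory Filter
open scoped ENNReal NNReal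

noncomputable section

/-- `N` is a norm on the real vector space `E`. -/
def IsNorm {E : Type*} [AddCommGroup E] [Module ℝ E] (N : E → ℝ) : Prop :=
  (∀ x, N x = 0 ↔ x = 0) ∧ (∀ (a : ℝ) (x : E), N (a • x) = |a| * N x) ∧
    ∀ x y, N (x + y) ≤ N x + N y

open Set Function Metric Topology
open scoped Nat

namespace IsNorm

variable {E : Type*} [NormedAddCommGroup E] [NormedSpace ℝ E] {N : E → ℝ}

def toSeminorm (hN : IsNorm N) : Seminorm ℝ E :=
  Seminorm.of N hN.2.2 fun a x => by rw [hN.2.1, Real.norm_eq_abs]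

@[simp]
lemma coe_toSeminorm (hN : IsNorm N) : ⇑hN.toSeminorm = N := rfl

variable [FiniteDimensional ℝ E]

lemma continuous (hN : IsNorm N) : Continuous N := by
  simpa using continuousOn_univ.mp (hN.toSeminorm.convexOn.continuousOn isOpen_univ)

lemma exists_le_mul_norm (hN : IsNorm N) : ∃ C, 0 < C ∧ ∀ x, N x ≤ C * ‖x‖ := by
  simpa using hN.toSeminorm.bound_of_continuous_normedSpace (by simpa using hN.continuous)

lemma exists_mul_norm_le (hN : IsNorm N) : ∃ c, 0 < c ∧ ∀ x, c * ‖x‖ ≤ N x := by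
  have hpos : ∀ x ∈ sphere (0 : E) 1, 0 < N x := fun x hx =>
    (apply_nonneg hN.toSeminorm x).lt_of_ne' fun h0 =>
      ne_of_mem_sphere hx one_ne_zero ((hN.1 x).1 h0)
  obtain ⟨c, hc, hcN⟩ :=
    (isCompact_sphere (0 : E) 1).exists_forall_le' hN.continuous.continuousOn hpos
  refine ⟨c, hc, fun x => ?_⟩
  rcases eq_or_ne x 0 with rfl | hx
  · simp [(hN.1 0).2 rfl]
  · have hx' : ‖x‖ ≠ 0 := norm_ne_zero_iff.2 hx
    have hu : ‖x‖⁻¹ • x ∈ sphere (0 : E) 1 := by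
      simp [norm_smul, hx']
    calc c * ‖x‖ ≤ N (‖x‖⁻¹ • x) * ‖x‖ := by gcongr; exact hcN _ hu
      _ = N x := by rw [hN.2.1, abs_inv, abs_norm]; field_simp

end IsNorm

theorem exists_lipschitzOnWith_closedBall_of_isNorm {ι E F : Type*}
    [NormedAddCommGroup E] [NormedSpace ℝ E] [FiniteDimensional ℝ E]
    [NormedAddCommGroup F] [NormedSpace ℝ F] [FiniteDimensional ℝ F]
    {N : E → ℝ} {M : F → ℝ} (hN : IsNorm N) (hM : IsNorm M) {f : ι → E → F} {S : Set ι}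
    (hf : ∀ r : ℝ, 0 < r → ∃ L : ℝ, ∀ i ∈ S, ∀ x y : E, x ≠ y → N x + N y ≤ r →
      M (f i x - f i y) ≤ L * N (x - y))
    (R : ℝ) : ∃ K : ℝ≥0, ∀ i ∈ S, LipschitzOnWith K (f i) (closedBall 0 R) := by
  obtain ⟨C, hC, hNC⟩ := hN.exists_le_mul_norm
  obtain ⟨c, hc, hcM⟩ := hM.exists_mul_norm_le
  obtain ⟨L, hL⟩ := hf (2 * C * max R 0 + 1) (by positivity)
  refine ⟨⟨max L 0 * C / c, by positivity⟩, fun i hi => LipschitzOnWith.of_dist_le_mul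
    fun x hx y hy => ?_⟩
  rcases eq_or_ne x y with rfl | hxy
  · simp
  have hxR : ‖x‖ ≤ max R 0 := (mem_closedBall_zero_iff.1 hx).trans (le_max_left _ _)
  have hyR : ‖y‖ ≤ max R 0 := (mem_closedBall_zero_iff.1 hy).trans (le_max_left _ _)
  have hball : N x + N y ≤ 2 * C * max R 0 + 1 := by
    nlinarith [hNC x, hNC y]
  rw [dist_eq_norm, dist_eq_norm]
  show ‖f i x - f i y‖ ≤ max L 0 * C / c * ‖x - y‖
  rw [div_mul_eq_mul_div, le_div_iff₀ hc]
  calc ‖f i x - f i y‖ * c ≤ M (f i x - f i y) := by rw [mul_comm]; exact hcM _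
    _ ≤ L * N (x - y) := hL i hi x y hxy hball
    _ ≤ max L 0 * (C * ‖x - y‖) :=
        mul_le_mul (le_max_left _ _) (hNC _) (apply_nonneg hN.toSeminorm _) (le_max_right _ _)
    _ = max L 0 * C * ‖x - y‖ := by ring

section Truncation

variable {ι : Type*} [Fintype ι]

def truncate (R : ℝ) (x : ι → ℝ) : ι → ℝ := fun i => max (-R) (min R (x i))

lemma lipschitzWith_truncate (R : ℝ) : LipschitzWith 1 (truncate R : (ι → ℝ) → ι → ℝ) := by
  refine LipschitzWith.of_dist_le_mul fun x y => ?_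
  rw [NNReal.coe_one, one_mul, dist_pi_le_iff dist_nonneg]
  intro i
  calc dist (truncate R x i) (truncate R y i) ≤ dist (min R (x i)) (min R (y i)) := by
        simpa only [truncate, Real.dist_eq, max_comm (-R)] using abs_max_sub_max_le_abs _ _ (-R)
    _ ≤ dist (x i) (y i) := by
        simpa [Real.dist_eq] using abs_min_sub_min_le_max R (x i) R (y i)
    _ ≤ dist x y := dist_le_pi_dist x y i

lemma truncate_mem_closedBall {R : ℝ} (hR : 0 ≤ R) (x : ι → ℝ) :
    truncate R x ∈ closedBall 0 R := by
  rw [mem_closedBall_zero_iff, pi_norm_le_iff_of_nonneg hR]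
  intro i
  rw [Real.norm_eq_abs, abs_le]
  exact ⟨le_max_left _ _, max_le (by linarith) (min_le_left _ _)⟩

lemma truncate_eq_self {R : ℝ} {x : ι → ℝ} (hx : x ∈ closedBall 0 R) : truncate R x = x := by
  funext i
  have := abs_le.1 ((norm_le_pi_norm x i).trans (mem_closedBall_zero_iff.1 hx))
  simp [truncate, this.1, this.2]

theorem exists_continuous_lipschitzWith_eqOn_closedBall {F : Type*} [NormedAddCommGroup F]
    {T R : ℝ} {K : ℝ≥0} (hT : 0 ≤ T) (hR : 0 ≤ R) {f : ℝ → (ι → ℝ) → F}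
    (hf : ContinuousOn (uncurry f) (Icc 0 T ×ˢ univ))
    (hK : ∀ s ∈ Icc 0 T, LipschitzOnWith K (f s) (closedBall 0 R)) :
    ∃ g : ℝ → (ι → ℝ) → F, Continuous (uncurry g) ∧ (∀ s, LipschitzWith K (g s)) ∧
      ∀ s ∈ Icc 0 T, ∀ x ∈ closedBall 0 R, g s x = f s x := by
  refine ⟨fun s x => f (projIcc 0 T hT s) (truncate R x), ?_, fun s => ?_, fun s hs x hx => ?_⟩
  · exact hf.comp_continuous
      (((continuous_projIcc (h := hT)).subtype_val.comp continuous_fst).prodMk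
      ((lipschitzWith_truncate R).continuous.comp continuous_snd))
      fun p => ⟨Subtype.mem _, mem_univ _⟩
  · simpa [Function.comp_def] using lipschitzOnWith_univ.1 ((hK _ (Subtype.mem _)).comp
      (lipschitzWith_truncate R).lipschitzOnWith fun x _ => truncate_mem_closedBall hR x)
  · simp only [projIcc_of_mem hT hs, truncate_eq_self hx]

end Truncation

section Picard

variable {E : Type*} [NormedAddCommGroup E] [NormedSpace ℝ E] {b : ℝ → E} {g : ℝ → E → E}

def picardStep (b : ℝ → E) (g : ℝ → E → E) (z : ℝ → E) : ℝ → E :=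
  fun u => b u + ∫ s in (0 : ℝ)..u, g s (z s)

lemma continuous_picardStep (hb : Continuous b) (hg : Continuous (uncurry g)) {z : ℝ → E}
    (hz : Continuous z) : Continuous (picardStep b g z) :=
  hb.add (intervalIntegral.continuous_primitive
    (fun _ _ => (hg.comp (continuous_id.prodMk hz)).intervalIntegrable _ _) 0)

lemma continuous_iterate_picardStep (hb : Continuous b) (hg : Continuous (uncurry g)) (n : ℕ) :
    Continuous ((picardStep b g)^[n] 0) := by
  induction n with
  | zero => exact continuous_const
  | succ n ih => rw [iterate_succ_apply']; exact continuous_picardStep hb hg ih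

lemma norm_picardStep_sub_le {K : ℝ≥0} (hg : Continuous (uncurry g))
    (hK : ∀ s, LipschitzWith K (g s)) {z w : ℝ → E} {u : ℝ} (hu : 0 ≤ u)
    (hz : ContinuousOn z (Icc 0 u)) (hw : ContinuousOn w (Icc 0 u)) :
    ‖picardStep b g z u - picardStep b g w u‖ ≤ ∫ s in (0 : ℝ)..u, K * ‖z s - w s‖ := by
  have hint : ∀ {v : ℝ → E}, ContinuousOn v (Icc 0 u) →
      IntervalIntegrable (fun s => g s (v s)) volume 0 u := fun hv =>
    (hg.comp_continuousOn (continuousOn_id.prodMk hv)).intervalIntegrable_of_Icc hu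
  rw [picardStep, picardStep, add_sub_add_left_eq_sub,
    ← intervalIntegral.integral_sub (hint hz) (hint hw)]
  exact intervalIntegral.norm_integral_le_of_norm_le hu
    (ae_of_all _ fun s _ => (hK s).norm_sub_le _ _)
    ((continuousOn_const.mul (hz.sub hw).norm).intervalIntegrable_of_Icc hu)

lemma integral_mul_pow_div_factorial (K D u : ℝ) (n : ℕ) :
    ∫ s in (0 : ℝ)..u, K * (D * (K * s) ^ n / n !) = D * (K * u) ^ (n + 1) / (n + 1)! := by
  have h : (fun s : ℝ => K * (D * (K * s) ^ n / n !)) =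
      fun s => (D * K ^ (n + 1) / n !) * s ^ n := by
    funext s; ring
  rw [h, intervalIntegral.integral_const_mul, integral_pow, Nat.factorial_succ]
  push_cast
  field_simp
  ring

lemma le_mul_pow_div_factorial_of_le_integral {t K D : ℝ} (hK : 0 ≤ K) {e : ℕ → ℝ → ℝ}
    (he : ∀ n, ContinuousOn (e n) (Icc 0 t)) (h0 : ∀ u ∈ Icc 0 t, e 0 u ≤ D)
    (hstep : ∀ n, ∀ u ∈ Icc 0 t, e (n + 1) u ≤ ∫ s in (0 : ℝ)..u, K * e n s) (n : ℕ) :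
    ∀ u ∈ Icc 0 t, e n u ≤ D * (K * u) ^ n / n ! := by
  induction n with
  | zero => simpa using h0
  | succ n ih =>
    intro u hu
    have hsub : Icc 0 u ⊆ Icc 0 t := Icc_subset_Icc_right hu.2
    calc e (n + 1) u ≤ ∫ s in (0 : ℝ)..u, K * e n s := hstep n u hu
      _ ≤ ∫ s in (0 : ℝ)..u, K * (D * (K * s) ^ n / n !) := by
          refine intervalIntegral.integral_mono_on hu.1
            ((continuousOn_const.mul ((he n).mono hsub)).intervalIntegrable_of_Icc hu.1)
            ((by fun_prop : Continuous fun s : ℝ => K * (D * (K * s) ^ n / n !)).intervalIntegrable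
              _ _)
            fun s hs => ?_
          exact mul_le_mul_of_nonneg_left (ih s (hsub hs)) hK
      _ = D * (K * u) ^ (n + 1) / (n + 1)! := integral_mul_pow_div_factorial K D u n

theorem tendsto_iterate_picardStep {K : ℝ≥0} (hb : Continuous b) (hg : Continuous (uncurry g))
    (hK : ∀ s, LipschitzWith K (g s)) {y : ℝ → E} {t : ℝ} (ht : 0 ≤ t)
    (hy : ContinuousOn y (Icc 0 t)) (hfix : ∀ u ∈ Icc 0 t, picardStep b g y u = y u) :
    Tendsto (fun n => (picardStep b g)^[n] 0 t) atTop (𝓝 (y t)) := by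
  obtain ⟨D, hD⟩ := isCompact_Icc.exists_bound_of_continuousOn hy
  have hcont := continuous_iterate_picardStep hb hg
  have hstep : ∀ n, ∀ u ∈ Icc 0 t, ‖(picardStep b g)^[n + 1] 0 u - y u‖ ≤
      ∫ s in (0 : ℝ)..u, K * ‖(picardStep b g)^[n] 0 s - y s‖ := fun n u hu => by
    rw [iterate_succ_apply', ← hfix u hu]
    exact norm_picardStep_sub_le hg hK hu.1 (hcont n).continuousOn
      (hy.mono (Icc_subset_Icc_right hu.2))
  have hbound := le_mul_pow_div_factorial_of_le_integral K.2
    (fun n => ((hcont n).continuousOn.sub hy).norm) (fun u hu => by simpa using hD u hu) hstep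
  rw [tendsto_iff_norm_sub_tendsto_zero]
  refine squeeze_zero (fun n => norm_nonneg _) (fun n => hbound n t ⟨ht, le_rfl⟩) ?_
  simpa [mul_div_assoc] using (FloorSemiring.tendsto_pow_div_factorial_atTop (K * t)).const_mul D

variable {Ω : Type*} [MeasurableSpace Ω] {b : Ω → ℝ → E}

lemma stronglyMeasurable_picardStep (hg : Continuous (uncurry g))
    (hbm : ∀ u, StronglyMeasurable fun ω => b ω u) {z : Ω → ℝ → E} (hzc : ∀ ω, Continuous (z ω))
    (hzm : ∀ s, StronglyMeasurable fun ω => z ω s) (u : ℝ) :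
    StronglyMeasurable fun ω => picardStep (b ω) g (z ω) u := by
  have hF : StronglyMeasurable (uncurry fun s ω => g s (z ω s)) :=
    stronglyMeasurable_uncurry_of_continuous_of_stronglyMeasurable
      (fun ω => hg.comp (continuous_id.prodMk (hzc ω)))
      (fun s => (hg.comp (Continuous.prodMk_right s)).comp_stronglyMeasurable (hzm s))
  exact (hbm u).add (hF.integral_prod_left.sub hF.integral_prod_left)

lemma stronglyMeasurable_iterate_picardStep (hb : ∀ ω, Continuous (b ω))
    (hbm : ∀ u, StronglyMeasurable fun ω => b ω u) (hg : Continuous (uncurry g)) (n : ℕ) (u : ℝ) :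
    StronglyMeasurable fun ω => (picardStep (b ω) g)^[n] 0 u := by
  induction n generalizing u with
  | zero => exact stronglyMeasurable_const
  | succ n ih =>
    simp only [iterate_succ_apply']
    exact stronglyMeasurable_picardStep hg hbm
      (fun ω => continuous_iterate_picardStep (hb ω) hg n) ih u

theorem exists_stronglyMeasurable_eq_of_forall_picardStep_eq [CompleteSpace E] {K : ℝ≥0}
    (hb : ∀ ω, Continuous (b ω)) (hbm : ∀ u, StronglyMeasurable fun ω => b ω u)
    (hg : Continuous (uncurry g)) (hK : ∀ s, LipschitzWith K (g s)) {t : ℝ} (ht : 0 ≤ t) :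
    ∃ G : Ω → E, StronglyMeasurable G ∧ ∀ ω (y : ℝ → E), ContinuousOn y (Icc 0 t) →
      (∀ u ∈ Icc 0 t, picardStep (b ω) g y u = y u) → G ω = y t :=
  ⟨fun ω => limUnder atTop fun n => (picardStep (b ω) g)^[n] 0 t,
    StronglyMeasurable.limUnder fun n => stronglyMeasurable_iterate_picardStep hb hbm hg n t,
    fun ω _ hy hfix => (tendsto_iterate_picardStep (hb ω) hg hK ht hy hfix).limUnder_eq⟩

end Picard

section Solution

variable {ι Ω : Type*} [Fintype ι] [MeasurableSpace Ω]

theorem exists_stronglyMeasurable_eq_of_forall_norm_le {T R : ℝ} (hT : 0 ≤ T) (hR : 0 ≤ R)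
    {f : ℝ → (ι → ℝ) → (ι → ℝ)} (hf : ContinuousOn (uncurry f) (Icc 0 T ×ˢ univ)) {K : ℝ≥0}
    (hK : ∀ s ∈ Icc 0 T, LipschitzOnWith K (f s) (closedBall 0 R)) {b y : Ω → ℝ → (ι → ℝ)}
    (hbc : ∀ ω, ContinuousOn (b ω) (Icc 0 T)) (hbm : ∀ u ∈ Icc 0 T, Measurable fun ω => b ω u)
    (hyc : ∀ ω, ContinuousOn (y ω) (Icc 0 T))
    (hy : ∀ ω, ∀ u ∈ Icc 0 T, y ω u = b ω u + ∫ s in (0 : ℝ)..u, f s (y ω s))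
    {t : ℝ} (ht : t ∈ Icc 0 T) :
    ∃ G : Ω → (ι → ℝ), StronglyMeasurable G ∧
      ∀ ω, (∀ s ∈ Icc 0 T, ‖y ω s‖ ≤ R) → G ω = y ω t := by
  obtain ⟨g, hg, hgK, hgf⟩ := exists_continuous_lipschitzWith_eqOn_closedBall hT hR hf hK
  have hb : ∀ ω, Continuous fun u => b ω (projIcc 0 T hT u) := fun ω =>
    (hbc ω).comp_continuous continuous_projIcc.subtype_val fun u => (projIcc 0 T hT u).2
  have hbm' : ∀ u, StronglyMeasurable fun ω => b ω (projIcc 0 T hT u) := fun u =>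
    (hbm _ (projIcc 0 T hT u).2).stronglyMeasurable
  obtain ⟨G, hGm, hG⟩ := exists_stronglyMeasurable_eq_of_forall_picardStep_eq hb hbm' hg hgK ht.1
  refine ⟨G, hGm, fun ω hω => hG ω _ ((hyc ω).mono (Icc_subset_Icc_right ht.2)) fun u hu => ?_⟩
  have huT : u ∈ Icc 0 T := ⟨hu.1, hu.2.trans ht.2⟩
  have hint : ∫ s in (0 : ℝ)..u, g s (y ω s) = ∫ s in (0 : ℝ)..u, f s (y ω s) :=
    intervalIntegral.integral_congr fun s hs => by
      have hsT : s ∈ Icc 0 T := Icc_subset_Icc_right huT.2 (by rwa [uIcc_of_le hu.1] at hs)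
      exact hgf s hsT _ (mem_closedBall_zero_iff.2 (hω s hsT))
  rw [picardStep, hint, projIcc_of_mem hT huT, hy ω u huT]

theorem measurable_of_forall_eq_add_integral {T : ℝ} (hT : 0 ≤ T)
    {f : ℝ → (ι → ℝ) → (ι → ℝ)} (hf : ContinuousOn (uncurry f) (Icc 0 T ×ˢ univ))
    (hloc : ∀ R : ℝ, ∃ K : ℝ≥0, ∀ s ∈ Icc 0 T, LipschitzOnWith K (f s) (closedBall 0 R))
    {b y : Ω → ℝ → (ι → ℝ)}
    (hbc : ∀ ω, ContinuousOn (b ω) (Icc 0 T)) (hbm : ∀ u ∈ Icc 0 T, Measurable fun ω => b ω u)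
    (hyc : ∀ ω, ContinuousOn (y ω) (Icc 0 T))
    (hy : ∀ ω, ∀ u ∈ Icc 0 T, y ω u = b ω u + ∫ s in (0 : ℝ)..u, f s (y ω s))
    {t : ℝ} (ht : t ∈ Icc 0 T) :
    Measurable fun ω => y ω t := by
  have hG : ∀ m : ℕ, ∃ G : Ω → (ι → ℝ), StronglyMeasurable G ∧
      ∀ ω, (∀ s ∈ Icc 0 T, ‖y ω s‖ ≤ m) → G ω = y ω t := fun m =>
    exists_stronglyMeasurable_eq_of_forall_norm_le hT m.cast_nonneg hf (hloc m).choose_spec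
      hbc hbm hyc hy ht
  choose G hGm hG using hG
  refine measurable_of_tendsto_metrizable (fun m => (hGm m).measurable)
    (tendsto_pi_nhds.2 fun ω => ?_)
  obtain ⟨C, hC⟩ := isCompact_Icc.exists_bound_of_continuousOn (hyc ω)
  obtain ⟨m₀, hm₀⟩ := exists_nat_ge C
  exact tendsto_atTop_of_eventually_const fun m hm =>
    hG m ω fun s hs => (hC s hs).trans (hm₀.trans (Nat.cast_le.2 hm))

end Solution

theorem pathwise_solution_is_stochastic_process_general
    (d : ℕ) (T : ℝ) (hT : 0 ≤ T)
    (f : ℝ → (Fin d → ℝ) → (Fin d → ℝ))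
    (hfc : ContinuousOn (fun p : ℝ × (Fin d → ℝ) => f p.1 p.2)
      (Set.Icc 0 T ×ˢ Set.univ))
    (ξ : Fin d → ℝ)
    {Ω : Type*} [MeasurableSpace Ω]
    (W : ℝ → Ω → (Fin d → ℝ))
    (hWmeas : ∀ t ∈ Set.Icc (0 : ℝ) T, Measurable (W t))
    (hWcont : ∀ ω, ContinuousOn (fun t => W t ω) (Set.Icc (0 : ℝ) T))
    (Nd : (Fin d → ℝ) → ℝ) (hNd : IsNorm Nd)
    (hlip : ∀ r : ℝ, 0 < r → ∃ L : ℝ, ∀ t ∈ Set.Icc (0 : ℝ) T,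
      ∀ x y : Fin d → ℝ, x ≠ y → Nd x + Nd y ≤ r →
        Nd (f t x - f t y) ≤ L * Nd (x - y))
    (Y : ℝ → Ω → (Fin d → ℝ))
    (hYcont : ∀ ω, ContinuousOn (fun t => Y t ω) (Set.Icc (0 : ℝ) T))
    (hYeq : ∀ t ∈ Set.Icc (0 : ℝ) T, ∀ ω,
      Y t ω = ξ + (∫ s in (0 : ℝ)..t, f s (Y s ω)) + W t ω) :
    ∀ t ∈ Set.Icc (0 : ℝ) T, Measurable (fun ω => Y t ω) := by
  intro t ht
  refine measurable_of_forall_eq_add_integral (b := fun ω u => ξ + W u ω)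
    (y := fun ω s => Y s ω) hT hfc (exists_lipschitzOnWith_closedBall_of_isNorm hNd hNd hlip)
    (fun ω => continuousOn_const.add (hWcont ω)) (fun u hu => measurable_const.add (hWmeas u hu))
    hYcont (fun ω u hu => ?_) ht
  rw [hYeq u hu ω]
  abel

/-- **Lemma (measurability of pathwise solutions of additive noise SDEs).** -/
theorem pathwise_solution_is_stochastic_process
    (d : ℕ) (hd : 0 < d) (T : ℝ) (hT : 0 ≤ T)
    (f : ℝ → (Fin d → ℝ) → (Fin d → ℝ))
    (hfc : ContinuousOn (fun p : ℝ × (Fin d → ℝ) => f p.1 p.2)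
      (Set.Icc 0 T ×ˢ Set.univ))
    (ξ : Fin d → ℝ)
    {Ω : Type*} [MeasurableSpace Ω] (P : Measure Ω) [IsProbabilityMeasure P]
    (W : ℝ → Ω → (Fin d → ℝ))
    (hWmeas : ∀ t ∈ Set.Icc (0 : ℝ) T, Measurable (W t))
    (hWcont : ∀ ω, ContinuousOn (fun t => W t ω) (Set.Icc (0 : ℝ) T))
    (Nd : (Fin d → ℝ) → ℝ) (hNd : IsNorm Nd)
    (hlip : ∀ r : ℝ, 0 < r → ∃ L : ℝ, ∀ t ∈ Set.Icc (0 : ℝ) T,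
      ∀ x y : Fin d → ℝ, x ≠ y → Nd x + Nd y ≤ r →
        Nd (f t x - f t y) ≤ L * Nd (x - y))
    (Y : ℝ → Ω → (Fin d → ℝ))
    (hYcont : ∀ ω, ContinuousOn (fun t => Y t ω) (Set.Icc (0 : ℝ) T))
    (hYeq : ∀ t ∈ Set.Icc (0 : ℝ) T, ∀ ω,
      Y t ω = ξ + (∫ s in (0 : ℝ)..t, f s (Y s ω)) + W t ω) :
    ∀ t ∈ Set.Icc (0 : ℝ) T, Measurable (fun ω => Y t ω) :=
  pathwise_solution_is_stochastic_process_general d T hT f hfc ξ W hWmeas hWcont Nd hNd hlip Y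
    hYcont hYeq
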